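/- Let w(y) = √2 · sech(y) and let λ ∈ ℝ with λ ≠ 3. Suppose ψ : ℝ → ℝ is twice continuously differentiable, ψ and ψ' are bounded and tend to 0 as |y| → ∞, and ψ satisfies (L₀ − λ)ψ = w³, i.e., ψ''(y) − ψ(y) + 3·w(y)²·ψ(y) − λ·ψ(y) = w(y)³ for all y. Then ∫_ℝ w(y)²·ψ(y) dy = (3π/√2)/(3 − λ). -/

import Mathlib

/-!
`L₀` is formally self-adjoint and `L₀ (w²) = 3 w²`. Multiplying `(L₀ - λ) ψ = w³` by `w²` and
integrating therefore gives `(3 - λ) ∫ w² ψ = ∫ w⁵`: the difference `w² ψ'' - (w²)'' ψ` is the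
derivative of the Wronskian `w² ψ' - (w²)' ψ`, which vanishes at `±∞` because `w²` and `(w²)'`
decay while `ψ` and `ψ'` stay bounded. Finally `∫ w⁵ = 3/2 ∫ w = 3π/√2` by a reduction formula.
-/

open MeasureTheory Real Filter

/-- The homoclinic solution of the core problem for `p = 3`: `w(y) = √2 sech(y)`. -/
noncomputable def w3 (y : ℝ) : ℝ := Real.sqrt 2 / Real.cosh y

open Topology

namespace Real

lemma one_add_sq_le_four_mul_cosh (y : ℝ) : 1 + y ^ 2 ≤ 4 * cosh y := by
  have hexp := quadratic_le_exp_of_nonneg (abs_nonneg y)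
  rw [← cosh_abs, cosh_eq]
  nlinarith [exp_pos (-|y|), sq_abs y, abs_nonneg y]

lemma tendsto_cosh_cocompact : Tendsto cosh (cocompact ℝ) atTop := by
  refine tendsto_atTop_mono (fun y => ?_) (tendsto_norm_cocompact_atTop.atTop_div_const
    (by norm_num : (0 : ℝ) < 4))
  have := one_add_sq_le_four_mul_cosh y
  rw [norm_eq_abs]
  nlinarith [sq_nonneg (|y| - 1), sq_abs y]

lemma integrable_inv_cosh : Integrable fun y => (cosh y)⁻¹ := by
  refine (integrable_inv_one_add_sq.const_mul 4).mono'
    (continuous_cosh.inv₀ (cosh_pos · |>.ne')).aestronglyMeasurable (ae_of_all _ fun y => ?_)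
  rw [norm_inv, norm_of_nonneg (cosh_pos y).le, ← div_eq_mul_inv, inv_le_comm₀ (cosh_pos y)
    (by positivity), inv_div]
  exact div_le_of_le_mul₀ (by positivity) (by positivity)
    (by linarith [one_add_sq_le_four_mul_cosh y])

lemma hasDerivAt_tanh (y : ℝ) : HasDerivAt tanh ((cosh y ^ 2)⁻¹) y := by
  rw [show tanh = fun x => sinh x / cosh x from funext tanh_eq_sinh_div_cosh]
  refine ((hasDerivAt_sinh y).div (hasDerivAt_cosh y) (cosh_pos y).ne').congr_deriv ?_
  have := (cosh_pos y).ne'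
  field_simp
  linear_combination cosh_sq' y

lemma tendsto_sinh_atTop : Tendsto sinh atTop atTop :=
  tendsto_atTop_atTop_of_monotone sinh_strictMono.monotone
    fun b => (sinh_surjective b).imp fun _ ha => ha.ge

lemma tendsto_sinh_atBot : Tendsto sinh atBot atBot :=
  tendsto_atBot_atBot_of_monotone sinh_strictMono.monotone
    fun b => (sinh_surjective b).imp fun _ ha => ha.le

lemma hasDerivAt_arctan_sinh (y : ℝ) :
    HasDerivAt (fun x => arctan (sinh x)) (cosh y)⁻¹ y := by
  refine ((hasDerivAt_arctan (sinh y)).comp y (hasDerivAt_sinh y)).congr_deriv ?_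
  have := (cosh_pos y).ne'
  rw [← cosh_sq']
  field_simp

lemma tendsto_arctan_sinh_atTop : Tendsto (fun y => arctan (sinh y)) atTop (𝓝 (π / 2)) :=
  (tendsto_arctan_atTop.mono_right nhdsWithin_le_nhds).comp tendsto_sinh_atTop

lemma tendsto_arctan_sinh_atBot : Tendsto (fun y => arctan (sinh y)) atBot (𝓝 (-(π / 2))) :=
  (tendsto_arctan_atBot.mono_right nhdsWithin_le_nhds).comp tendsto_sinh_atBot

end Real

theorem integral_wronskian_deriv_eq_zero {u u' u'' v v' v'' : ℝ → ℝ}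
    (hu : ∀ x, HasDerivAt u (u' x) x) (hu' : ∀ x, HasDerivAt u' (u'' x) x)
    (hv : ∀ x, HasDerivAt v (v' x) x) (hv' : ∀ x, HasDerivAt v' (v'' x) x)
    (hint : Integrable fun x => u x * v'' x - u'' x * v x)
    (hu_lim : Tendsto u (cocompact ℝ) (𝓝 0)) (hu'_lim : Tendsto u' (cocompact ℝ) (𝓝 0))
    (hv_bdd : IsBoundedUnder (· ≤ ·) (cocompact ℝ) (norm ∘ v))
    (hv'_bdd : IsBoundedUnder (· ≤ ·) (cocompact ℝ) (norm ∘ v')) :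
    ∫ x, (u x * v'' x - u'' x * v x) = 0 := by
  have hW : ∀ x, HasDerivAt (fun x => u x * v' x - u' x * v x) (u x * v'' x - u'' x * v x) x :=
    fun x => (((hu x).mul (hv' x)).sub ((hu' x).mul (hv x))).congr_deriv (by ring)
  have hW_lim : Tendsto (fun x => u x * v' x - u' x * v x) (cocompact ℝ) (𝓝 0) := by
    simpa using (hu_lim.zero_mul_isBoundedUnder_le hv'_bdd).sub
      (hu'_lim.zero_mul_isBoundedUnder_le hv_bdd)
  simpa using integral_of_hasDerivAt_of_tendsto hW hint (hW_lim.mono_left atBot_le_cocompact)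
    (hW_lim.mono_left atTop_le_cocompact)

lemma w3_sq (y : ℝ) : w3 y ^ 2 = 2 / cosh y ^ 2 := by
  rw [w3, div_pow, sq_sqrt zero_le_two]

lemma abs_w3_le (y : ℝ) : |w3 y| ≤ √2 := by
  rw [w3, abs_div, abs_of_pos (cosh_pos y), abs_of_nonneg (sqrt_nonneg 2)]
  exact div_le_self (sqrt_nonneg 2) (one_le_cosh y)

lemma tanh_sq_eq_one_sub_w3_sq (y : ℝ) : tanh y ^ 2 = 1 - w3 y ^ 2 / 2 := by
  have := (cosh_pos y).ne'
  rw [w3_sq, tanh_eq_sinh_div_cosh]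
  field_simp
  linear_combination -cosh_sq' y

lemma hasDerivAt_w3 (y : ℝ) : HasDerivAt w3 (-(w3 y * tanh y)) y := by
  refine ((hasDerivAt_const y (√2)).div (hasDerivAt_cosh y) (cosh_pos y).ne').congr_deriv ?_
  have := (cosh_pos y).ne'
  rw [w3, tanh_eq_sinh_div_cosh]
  field_simp
  ring

lemma hasDerivAt_w3_sq (y : ℝ) :
    HasDerivAt (fun y => w3 y ^ 2) (-2 * w3 y ^ 2 * tanh y) y :=
  ((hasDerivAt_w3 y).pow 2).congr_deriv (by ring)

-- `(w²)'' = 4 w² - 3 w⁴` is the identity `L₀ (w²) = 3 w²`.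
lemma hasDerivAt_neg_two_mul_w3_sq_mul_tanh (y : ℝ) :
    HasDerivAt (fun y => -2 * w3 y ^ 2 * tanh y) (4 * w3 y ^ 2 - 3 * w3 y ^ 4) y := by
  refine (((hasDerivAt_w3_sq y).const_mul (-2)).mul (hasDerivAt_tanh y)).congr_deriv ?_
  have := (cosh_pos y).ne'
  have hsech : (cosh y ^ 2)⁻¹ = w3 y ^ 2 / 2 := by rw [w3_sq]; field_simp
  rw [hsech]
  linear_combination (4 * w3 y ^ 2) * tanh_sq_eq_one_sub_w3_sq y

lemma tendsto_w3_cocompact : Tendsto w3 (cocompact ℝ) (𝓝 0) :=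
  tendsto_const_nhds.div_atTop tendsto_cosh_cocompact

lemma tendsto_w3_mul_tanh_cocompact : Tendsto (fun y => w3 y * tanh y) (cocompact ℝ) (𝓝 0) :=
  tendsto_w3_cocompact.zero_mul_isBoundedUnder_le
    (isBoundedUnder_of ⟨1, fun y => (abs_tanh_lt_one y).le⟩)

lemma tendsto_neg_two_mul_w3_sq_mul_tanh_cocompact :
    Tendsto (fun y => -2 * w3 y ^ 2 * tanh y) (cocompact ℝ) (𝓝 0) := by
  simpa [pow_two, mul_assoc] using
    (tendsto_w3_cocompact.mul tendsto_w3_mul_tanh_cocompact).const_mul (-2)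

lemma continuous_w3 : Continuous w3 :=
  continuous_const.div continuous_cosh (cosh_pos · |>.ne')

lemma integrable_w3 : Integrable w3 :=
  (integrable_inv_cosh.const_mul (√2)).congr (ae_of_all _ fun _ => (div_eq_mul_inv _ _).symm)

lemma integrable_w3_sq_mul {f : ℝ → ℝ} {C : ℝ} (hf : Continuous f) (hC : ∀ y, |f y| ≤ C) :
    Integrable fun y => w3 y ^ 2 * f y := by
  have hbdd : ∀ y, ‖w3 y * f y‖ ≤ √2 * C := fun y => by
    rw [norm_mul, norm_eq_abs, norm_eq_abs]
    exact mul_le_mul (abs_w3_le y) (hC y) (abs_nonneg _) (sqrt_nonneg 2)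
  exact (integrable_w3.mul_bdd (g := fun y => w3 y * f y)
    (continuous_w3.mul hf).aestronglyMeasurable (ae_of_all _ hbdd)).congr
    (ae_of_all _ fun y => by ring)

lemma integrable_w3_pow_five : Integrable fun y => w3 y ^ 5 := by
  refine (integrable_w3_sq_mul (f := fun y => w3 y ^ 3) (C := √2 ^ 3)
    (continuous_w3.pow 3) fun y => ?_).congr (ae_of_all _ fun y => by ring)
  rw [abs_pow]
  exact pow_le_pow_left₀ (abs_nonneg _) (abs_w3_le y) 3

-- `(w^k tanh)' = (k+1)/2 w^(k+2) - k w^k` gives `∫ w⁵ = 3/2 ∫ w`, and `w = √2 (arctan ∘ sinh)'`.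
lemma integral_w3_pow_five : ∫ y, w3 y ^ 5 = 3 * π / √2 := by
  have hH : ∀ y, HasDerivAt
      (fun y => w3 y * tanh y * (w3 y ^ 2 + 3) / 2 + 3 / √2 * arctan (sinh y)) (w3 y ^ 5) y := by
    intro y
    refine ((((hasDerivAt_w3 y).mul (hasDerivAt_tanh y)).mul (((hasDerivAt_w3 y).pow 2).add_const
      3)).div_const 2 |>.add ((hasDerivAt_arctan_sinh y).const_mul _)).congr_deriv ?_
    have := (cosh_pos y).ne'
    have hsech : (cosh y ^ 2)⁻¹ = w3 y ^ 2 / 2 := by rw [w3_sq]; field_simp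
    have hw : 3 / √2 * (cosh y)⁻¹ = 3 / 2 * w3 y := by
      rw [w3]; field_simp; rw [sq_sqrt zero_le_two]
    simp only [Pi.pow_apply, Pi.mul_apply, hsech, hw]
    linear_combination (-(3 * w3 y ^ 3 + 3 * w3 y) / 2) * tanh_sq_eq_one_sub_w3_sq y
  have hlim : ∀ l ≤ cocompact ℝ, Tendsto (fun y => w3 y * tanh y * (w3 y ^ 2 + 3) / 2) l (𝓝 0) :=
    fun l hl => by
      simpa using (((tendsto_w3_mul_tanh_cocompact.mul
        ((tendsto_w3_cocompact.pow 2).add_const 3)).div_const 2)).mono_left hl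
  rw [integral_of_hasDerivAt_of_tendsto hH integrable_w3_pow_five
    (by simpa using (hlim _ atBot_le_cocompact).add (tendsto_arctan_sinh_atBot.const_mul (3 / √2)))
    (by simpa using (hlim _ atTop_le_cocompact).add (tendsto_arctan_sinh_atTop.const_mul (3 / √2)))]
  ring

theorem integral_w_sq_inverse (lam : ℝ) (hlam : lam ≠ 3) (ψ : ℝ → ℝ)
    (hψ : ContDiff ℝ 2 ψ)
    (hψ_bdd : ∃ C : ℝ, ∀ y : ℝ, |ψ y| ≤ C ∧ |deriv ψ y| ≤ C)
    (heq : ∀ y : ℝ, deriv (deriv ψ) y - ψ y + 3 * (w3 y) ^ 2 * ψ y - lam * ψ y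
        = (w3 y) ^ 3) :
    ∫ y : ℝ, (w3 y) ^ 2 * ψ y = (3 * Real.pi / Real.sqrt 2) / (3 - lam) := by
  obtain ⟨C, hC⟩ := hψ_bdd
  have hψ' : ∀ y, HasDerivAt ψ (deriv ψ y) y :=
    fun y => (hψ.differentiable two_ne_zero y).hasDerivAt
  have hψ'' : ∀ y, HasDerivAt (deriv ψ) (deriv (deriv ψ) y) y := fun y =>
    ((iteratedDeriv_one (f := ψ)) ▸ hψ.differentiable_iteratedDeriv 1 (by norm_num) y).hasDerivAt
  have hw2ψ : Integrable fun y => w3 y ^ 2 * ψ y :=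
    integrable_w3_sq_mul hψ.continuous fun y => (hC y).1
  have hLψ : ∀ y, w3 y ^ 2 * deriv (deriv ψ) y - (4 * w3 y ^ 2 - 3 * w3 y ^ 4) * ψ y
      = w3 y ^ 5 + (lam - 3) * (w3 y ^ 2 * ψ y) := fun y => by
    linear_combination w3 y ^ 2 * heq y
  have hint : Integrable fun y => w3 y ^ 5 + (lam - 3) * (w3 y ^ 2 * ψ y) :=
    integrable_w3_pow_five.add (hw2ψ.const_mul (lam - 3))
  have hzero := integral_wronskian_deriv_eq_zero hasDerivAt_w3_sq
    hasDerivAt_neg_two_mul_w3_sq_mul_tanh hψ' hψ'' (by simpa only [hLψ] using hint)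
    (by simpa using tendsto_w3_cocompact.pow 2) tendsto_neg_two_mul_w3_sq_mul_tanh_cocompact
    (isBoundedUnder_of ⟨C, fun y => (hC y).1⟩) (isBoundedUnder_of ⟨C, fun y => (hC y).2⟩)
  simp only [hLψ] at hzero
  rw [integral_add integrable_w3_pow_five (hw2ψ.const_mul _), integral_const_mul,
    integral_w3_pow_five] at hzero
  rw [eq_div_iff (sub_ne_zero.2 hlam.symm)]
  linear_combination -hzero
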